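/- arXiv:1504.03448 — 4 statements merged into one kernel-verified Lean document; each statement's English description precedes it below -/
import Mathlib

section
/- The affine geometric R-matrix is an involution: if R(a,b) = (b',a') then R(b',a') = (a,b), provided all relevant energies are nonzero. -/
/-!
Write `E i` for `E(a^(i), b^(i))` and `E' i` for the same energy of `(b', a')`. Telescoping the
energy sum gives the conservation law `a_i E_i - b_i E_{i+1} = ∏ a - ∏ b`, and the R-matrix
preserves `∏ a` and `∏ b`. If `∏ a = ∏ b`, the conservation law says `R(a, b) = (a, b)`.
Otherwise, comparing the conservation laws of `(a, b)` and `(b', a')` shows that `y = E' - E`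
satisfies `y_{i+1} a_i E_i² = y_i b_i E_{i+1}²`; going once around the cycle gives
`y_i (∏ a - ∏ b) ∏ E² = 0`, so `E' = E`. In both cases the energies of `(b', a')` are those of
`(a, b)`, and then the factors `E_j / E_{j+1}` introduced by the two applications of `R` cancel.
-/

/-- Cyclic shift of a vector (indexed `0,…,n-1`) by `i`. -/
noncomputable def cshift (n : ℕ) (a : ℕ → ℂ) (i : ℕ) : ℕ → ℂ := fun j => a ((j + i) % n)

/-- The energy `E(a,b) = ∑_{i=0}^{n-1} (∏_{j=1}^{i} b_j)(∏_{j=i+2}^{n} a_j)`. -/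
noncomputable def energy (n : ℕ) (a b : ℕ → ℂ) : ℂ :=
  ∑ i ∈ Finset.range n, (∏ j ∈ Finset.range i, b j) * ∏ j ∈ Finset.Ico (i + 1) n, a j

/-- The second output `a'` of the affine geometric R-matrix `R : (a,b) ↦ (b',a')`. -/
noncomputable def Ra (n : ℕ) (a b : ℕ → ℂ) : ℕ → ℂ := fun j =>
  a j * energy n (cshift n a j) (cshift n b j) /
    energy n (cshift n a (j + 1)) (cshift n b (j + 1))

/-- The first output `b'` of the affine geometric R-matrix `R : (a,b) ↦ (b',a')`. -/
noncomputable def Rb (n : ℕ) (a b : ℕ → ℂ) : ℕ → ℂ := fun j =>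
  b j * energy n (cshift n a (j + 1)) (cshift n b (j + 1)) /
    energy n (cshift n a j) (cshift n b j)

open Finset Function

lemma Function.Periodic.prod_range_add {M : Type*} [CommMonoid M] {f : ℕ → M} {n : ℕ}
    (hf : Periodic f n) (j : ℕ) : ∏ k ∈ range n, f (j + k) = ∏ k ∈ range n, f k := by
  induction j with
  | zero => simp
  | succ j ih =>
    rw [← ih]
    cases n with
    | zero => simp
    | succ m =>
      have hwrap : f (j + 1 + m) = f (j + 0) := by rw [add_assoc, add_comm 1 m, hf, add_zero]
      rw [prod_range_succ, prod_range_succ', hwrap]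
      simp only [add_right_comm j 1, add_assoc]

lemma mul_prod_range_eq_of_mul_succ_eq {M : Type*} [CommMonoid M] {y u v : ℕ → M}
    (h : ∀ i, y (i + 1) * u i = y i * v i) (j m : ℕ) :
    y (j + m) * ∏ k ∈ range m, u (j + k) = y j * ∏ k ∈ range m, v (j + k) := by
  induction m with
  | zero => simp
  | succ m ih =>
    rw [prod_range_succ, prod_range_succ, ← add_assoc, ← mul_assoc, mul_right_comm, h,
      mul_right_comm, ih, mul_assoc]

lemma Function.Periodic.eq_zero_of_mul_succ_eq {R : Type*} [CommRing R] [IsDomain R]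
    {y u v : ℕ → R} {n : ℕ} (hy : Periodic y n) (hu : Periodic u n) (hv : Periodic v n)
    (h : ∀ i, y (i + 1) * u i = y i * v i)
    (huv : ∏ k ∈ range n, u k ≠ ∏ k ∈ range n, v k) (j : ℕ) : y j = 0 := by
  have hcycle := mul_prod_range_eq_of_mul_succ_eq h j n
  rw [hy j, hu.prod_range_add, hv.prod_range_add, ← sub_eq_zero, ← mul_sub] at hcycle
  exact (mul_eq_zero.mp hcycle).resolve_right (sub_ne_zero.mpr huv)

lemma prod_range_mod {M : Type*} [CommMonoid M] (n : ℕ) (a : ℕ → M) :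
    ∏ k ∈ range n, a (k % n) = ∏ k ∈ range n, a k :=
  prod_congr rfl fun k hk => by rw [Nat.mod_eq_of_lt (mem_range.mp hk)]

lemma cshift_congr {n i i' : ℕ} (a : ℕ → ℂ) (h : i ≡ i' [MOD n]) :
    cshift n a i = cshift n a i' :=
  funext fun k => congrArg a (Nat.ModEq.add_left k h)

lemma prod_range_cshift (n : ℕ) (a : ℕ → ℂ) (i : ℕ) :
    ∏ k ∈ range n, cshift n a i k = ∏ k ∈ range n, a k := by
  have hper : Periodic (fun k => a (k % n)) n := fun k => by simp
  calc ∏ k ∈ range n, cshift n a i k = ∏ k ∈ range n, a ((i + k) % n) := by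
        simp only [cshift, add_comm]
    _ = ∏ k ∈ range n, a (k % n) := hper.prod_range_add i
    _ = ∏ k ∈ range n, a k := prod_range_mod n a

-- The sum telescopes against `F k = (∏_{j<k} B j) (∏_{k<j≤n} A j)`.
lemma energy_telescope (n : ℕ) (A B : ℕ → ℂ) :
    A n * energy n A B - B 0 * energy n (fun j => A (j + 1)) (fun j => B (j + 1)) =
      ∏ j ∈ range n, A (j + 1) - ∏ j ∈ range n, B j := by
  set F : ℕ → ℂ := fun k => (∏ j ∈ range k, B j) * ∏ j ∈ Ico (k + 1) (n + 1), A j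
  have hA : A n * energy n A B = ∑ k ∈ range n, F k := by
    rw [energy, mul_sum]
    refine sum_congr rfl fun k hk => ?_
    simp only [F]
    rw [prod_Ico_succ_top (by simp at hk; omega)]
    ring
  have hB : B 0 * energy n (fun j => A (j + 1)) (fun j => B (j + 1)) =
      ∑ k ∈ range n, F (k + 1) := by
    rw [energy, mul_sum]
    refine sum_congr rfl fun k _ => ?_
    simp only [F]
    rw [prod_range_succ' B k, prod_Ico_add' A (k + 1) n 1]
    ring
  have hF0 : F 0 = ∏ j ∈ range n, A (j + 1) := by
    simp only [F, range_zero, prod_empty, one_mul]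
    rw [range_eq_Ico, prod_Ico_add']
  have hFn : F n = ∏ j ∈ range n, B j := by simp [F]
  rw [hA, hB, ← sum_sub_distrib, sum_range_sub', hF0, hFn]

/-- The paper's `E(a^(i), b^(i))`. -/
noncomputable def shiftedEnergy (n : ℕ) (a b : ℕ → ℂ) (i : ℕ) : ℂ :=
  energy n (cshift n a i) (cshift n b i)

section shiftedEnergy

variable {n : ℕ} {a b : ℕ → ℂ}

lemma shiftedEnergy_congr {i i' : ℕ} (h : i ≡ i' [MOD n]) :
    shiftedEnergy n a b i = shiftedEnergy n a b i' := by
  rw [shiftedEnergy, cshift_congr a h, cshift_congr b h, shiftedEnergy]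

lemma shiftedEnergy_periodic : Periodic (shiftedEnergy n a b) n :=
  fun _ => shiftedEnergy_congr Nat.add_modEq_right

lemma prod_range_shiftedEnergy_succ :
    ∏ j ∈ range n, shiftedEnergy n a b (j + 1) = ∏ j ∈ range n, shiftedEnergy n a b j := by
  simpa only [add_comm 1] using shiftedEnergy_periodic.prod_range_add 1

lemma Ra_eq (j : ℕ) :
    Ra n a b j = a j * shiftedEnergy n a b j / shiftedEnergy n a b (j + 1) := rfl

lemma Rb_eq (j : ℕ) :
    Rb n a b j = b j * shiftedEnergy n a b (j + 1) / shiftedEnergy n a b j := rfl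

lemma Ra_mod (i : ℕ) :
    Ra n a b (i % n) = a (i % n) * shiftedEnergy n a b i / shiftedEnergy n a b (i + 1) := by
  rw [Ra_eq, shiftedEnergy_congr (Nat.mod_modEq i n),
    shiftedEnergy_congr ((Nat.mod_modEq i n).add_right 1)]

lemma Rb_mod (i : ℕ) :
    Rb n a b (i % n) = b (i % n) * shiftedEnergy n a b (i + 1) / shiftedEnergy n a b i := by
  rw [Rb_eq, shiftedEnergy_congr (Nat.mod_modEq i n),
    shiftedEnergy_congr ((Nat.mod_modEq i n).add_right 1)]

lemma mod_mul_shiftedEnergy_sub (i : ℕ) :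
    a (i % n) * shiftedEnergy n a b i - b (i % n) * shiftedEnergy n a b (i + 1) =
      ∏ j ∈ range n, a j - ∏ j ∈ range n, b j := by
  have hshift (c : ℕ → ℂ) : (fun j => cshift n c i (j + 1)) = cshift n c (i + 1) :=
    funext fun j => by simp only [cshift, add_right_comm j 1, add_assoc]
  have htelescope := energy_telescope n (cshift n a i) (cshift n b i)
  rw [hshift, hshift, prod_range_cshift, prod_range_cshift] at htelescope
  have hlast : cshift n a i n = a (i % n) := by simp [cshift]
  have hfirst : cshift n b i 0 = b (i % n) := by simp [cshift]
  rwa [hlast, hfirst] at htelescope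

variable (hE : ∀ i, shiftedEnergy n a b i ≠ 0)
include hE

lemma prod_range_Ra : ∏ j ∈ range n, Ra n a b j = ∏ j ∈ range n, a j := by
  simp only [Ra_eq, mul_div_assoc, prod_mul_distrib, prod_div_distrib,
    prod_range_shiftedEnergy_succ]
  rw [div_self (prod_ne_zero_iff.mpr fun j _ => hE j), mul_one]

lemma prod_range_Rb : ∏ j ∈ range n, Rb n a b j = ∏ j ∈ range n, b j := by
  simp only [Rb_eq, mul_div_assoc, prod_mul_distrib, prod_div_distrib,
    prod_range_shiftedEnergy_succ]
  rw [div_self (prod_ne_zero_iff.mpr fun j _ => hE j), mul_one]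

lemma Rb_mod_and_Ra_mod_of_prod_eq (h : ∏ j ∈ range n, a j = ∏ j ∈ range n, b j) (i : ℕ) :
    Rb n a b (i % n) = a (i % n) ∧ Ra n a b (i % n) = b (i % n) := by
  have hbalance := mod_mul_shiftedEnergy_sub (n := n) (a := a) (b := b) i
  rw [h, sub_self, sub_eq_zero] at hbalance
  rw [Rb_mod, Ra_mod, div_eq_iff (hE i), div_eq_iff (hE (i + 1))]
  exact ⟨hbalance.symm, hbalance⟩

lemma shiftedEnergy_Rb_Ra_of_prod_eq (h : ∏ j ∈ range n, a j = ∏ j ∈ range n, b j) :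
    shiftedEnergy n (Rb n a b) (Ra n a b) = shiftedEnergy n a b := by
  have hRb : cshift n (Rb n a b) = cshift n a :=
    funext fun i => funext fun j => (Rb_mod_and_Ra_mod_of_prod_eq hE h (j + i)).1
  have hRa : cshift n (Ra n a b) = cshift n b :=
    funext fun i => funext fun j => (Rb_mod_and_Ra_mod_of_prod_eq hE h (j + i)).2
  funext i
  rw [shiftedEnergy, hRb, hRa, shiftedEnergy]

lemma shiftedEnergy_Rb_Ra_sub_succ_mul (i : ℕ) :
    (shiftedEnergy n (Rb n a b) (Ra n a b) (i + 1) - shiftedEnergy n a b (i + 1)) *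
        (a (i % n) * shiftedEnergy n a b i ^ 2) =
      (shiftedEnergy n (Rb n a b) (Ra n a b) i - shiftedEnergy n a b i) *
        (b (i % n) * shiftedEnergy n a b (i + 1) ^ 2) := by
  have h := mod_mul_shiftedEnergy_sub (n := n) (a := a) (b := b) i
  have h' := mod_mul_shiftedEnergy_sub (n := n) (a := Rb n a b) (b := Ra n a b) i
  rw [prod_range_Rb hE, prod_range_Ra hE, Rb_mod, Ra_mod] at h'
  field_simp [hE i, hE (i + 1)] at h'
  linear_combination -h' - shiftedEnergy n a b i * shiftedEnergy n a b (i + 1) * h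

lemma shiftedEnergy_Rb_Ra_of_prod_ne (h : ∏ j ∈ range n, a j ≠ ∏ j ∈ range n, b j) :
    shiftedEnergy n (Rb n a b) (Ra n a b) = shiftedEnergy n a b := by
  have hper := shiftedEnergy_periodic (n := n) (a := a) (b := b)
  have hper' := shiftedEnergy_periodic (n := n) (a := Rb n a b) (b := Ra n a b)
  have hE2 : (∏ i ∈ range n, shiftedEnergy n a b i) ^ 2 ≠ 0 :=
    pow_ne_zero 2 (prod_ne_zero_iff.mpr fun i _ => hE i)
  funext j
  refine sub_eq_zero.mp <| Periodic.eq_zero_of_mul_succ_eq (n := n)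
    (y := fun i => shiftedEnergy n (Rb n a b) (Ra n a b) i - shiftedEnergy n a b i)
    (u := fun i => a (i % n) * shiftedEnergy n a b i ^ 2)
    (v := fun i => b (i % n) * shiftedEnergy n a b (i + 1) ^ 2)
    (fun i => by simp only [hper i, hper' i]) (fun i => by simp only [Nat.add_mod_right, hper i])
    (fun i => by simp only [Nat.add_mod_right, add_right_comm i n 1, hper (i + 1)])
    (shiftedEnergy_Rb_Ra_sub_succ_mul hE) ?_ j
  rw [prod_mul_distrib, prod_mul_distrib, prod_range_mod, prod_range_mod, prod_pow, prod_pow,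
    prod_range_shiftedEnergy_succ]
  exact fun heq => h (mul_right_cancel₀ hE2 heq)

theorem shiftedEnergy_Rb_Ra : shiftedEnergy n (Rb n a b) (Ra n a b) = shiftedEnergy n a b := by
  by_cases h : ∏ j ∈ range n, a j = ∏ j ∈ range n, b j
  · exact shiftedEnergy_Rb_Ra_of_prod_eq hE h
  · exact shiftedEnergy_Rb_Ra_of_prod_ne hE h

end shiftedEnergy

theorem R_matrix_involution_general (n : ℕ) (a b : ℕ → ℂ)
    (hE : ∀ i, energy n (cshift n a i) (cshift n b i) ≠ 0) :
    (∀ j, Rb n (Rb n a b) (Ra n a b) j = a j) ∧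
    (∀ j, Ra n (Rb n a b) (Ra n a b) j = b j) := by
  replace hE : ∀ i, shiftedEnergy n a b i ≠ 0 := hE
  have hinv := shiftedEnergy_Rb_Ra hE
  refine ⟨fun j => ?_, fun j => ?_⟩
  · rw [Rb_eq, hinv, Ra_eq]
    field_simp [hE j, hE (j + 1)]
  · rw [Ra_eq, hinv, Rb_eq]
    field_simp [hE j, hE (j + 1)]

/-- The affine geometric R-matrix is an involution: if `R(a,b) = (b',a')`
then `R(b',a') = (a,b)`, provided all relevant energies are nonzero. -/
theorem R_matrix_involution (n : ℕ) (hn : 1 ≤ n) (a b : ℕ → ℂ)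
    (ha : ∀ j, a j ≠ 0) (hb : ∀ j, b j ≠ 0)
    (hE : ∀ i, energy n (cshift n a i) (cshift n b i) ≠ 0)
    (hE' : ∀ i, energy n (cshift n (Rb n a b) i) (cshift n (Ra n a b) i) ≠ 0) :
    (∀ j, Rb n (Rb n a b) (Ra n a b) j = a j) ∧
    (∀ j, Ra n (Rb n a b) (Ra n a b) j = b j) :=
  R_matrix_involution_general n a b hE
end

section
/- Let n >= 2, m >= 1, 1 <= k <= n, and M = gcd(n, m+k). The number of interior lattice points of the triangle in R^2 with vertices (0,n), (k,0), (k+m,0) equals ((n-1)m - M - gcd(n,k) + 2)/2, i.e., twice the number of interior lattice points equals (n-1)m - M - gcd(n,k) + 2. -/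
/-!
Cut the triangle by the lines `y = n - j`, `0 < j < n`. In row `j` the lattice points are the
`x` with `c j < n x < d j` (`c = k`, `d = k + m`), and there are
`⌊d j / n⌋ - ⌊c j / n⌋ - [n ∣ d j]` of them. Pairing `j` with `n - j`,
`⌊c j / n⌋ + ⌊c (n - j) / n⌋ = c - 1 + [n ∣ c j]`, and exactly `gcd(c, n) - 1` of the `j`
satisfy `n ∣ c j`; hence `2 ∑_{0<j<n} ⌊c j / n⌋ = (c - 1)(n - 1) + gcd(c, n) - 1`.
-/

open Finset

namespace Int

theorem ediv_add_neg_ediv {n : ℤ} (hn : 0 < n) (a : ℤ) :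
    a / n + -a / n = if n ∣ a then 0 else -1 := by
  rw [Int.neg_ediv, Int.sign_eq_one_of_pos hn]
  split_ifs <;> ring

theorem card_filter_dvd_mul_Ioo {n : ℤ} (hn : 0 < n) (c : ℤ) :
    (#{j ∈ Ioo 0 n | n ∣ c * j} : ℤ) = gcd c n - 1 := by
  obtain ⟨g, c', d, hg, hcop, rfl, rfl⟩ :=
    Int.exists_gcd_one' (Int.gcd_pos_of_ne_zero_right c hn.ne')
  have hg' : (0 : ℤ) < g := by exact_mod_cast hg
  have hd : 0 < d := pos_of_mul_pos_left hn hg'.le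
  have hdvd : ∀ j, d * g ∣ c' * g * j ↔ d ∣ j := fun j => by
    rw [mul_right_comm, mul_dvd_mul_iff_right hg'.ne']
    have hcop' : IsCoprime d c' := Int.isCoprime_iff_gcd_eq_one.mpr (by rwa [Int.gcd_comm])
    exact ⟨hcop'.dvd_of_dvd_mul_left, (Dvd.dvd.mul_left · c')⟩
  have hmultiples : {j ∈ Ioo 0 (d * g) | d * g ∣ c' * g * j} = (Ioo 0 (g : ℤ)).map
      ⟨(d * ·), mul_right_injective₀ hd.ne'⟩ := by
    ext j
    simp only [mem_filter, mem_Ioo, hdvd, mem_map, Function.Embedding.coeFn_mk]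
    constructor
    · rintro ⟨⟨hj0, hjn⟩, t, rfl⟩
      exact ⟨t, ⟨pos_of_mul_pos_right hj0 hd.le, lt_of_mul_lt_mul_left hjn hd.le⟩, rfl⟩
    · rintro ⟨t, ⟨ht0, htg⟩, rfl⟩
      exact ⟨⟨mul_pos hd ht0, mul_lt_mul_of_pos_left htg hd⟩, dvd_mul_right d t⟩
  rw [hmultiples, card_map, Int.card_Ioo, Int.gcd_mul_right, hcop, Int.natAbs_natCast]
  omega

theorem two_mul_sum_mul_ediv_Ioo {n : ℤ} (hn : 0 < n) (c : ℤ) :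
    2 * ∑ j ∈ Ioo 0 n, c * j / n = (c - 1) * (n - 1) + gcd c n - 1 := by
  have hreflect : ∑ j ∈ Ioo 0 n, c * j / n = ∑ j ∈ Ioo 0 n, c * (n - j) / n :=
    sum_nbij' (n - ·) (n - ·) (by simp +contextual) (by simp +contextual)
      (by simp) (by simp) (by simp)
  have hpair (j : ℤ) : c * j / n + c * (n - j) / n = c - 1 + if n ∣ c * j then 1 else 0 := by
    rw [show c * (n - j) = -(c * j) + c * n by ring, Int.add_mul_ediv_right _ _ hn.ne',
      ← add_assoc, ediv_add_neg_ediv hn]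
    split_ifs <;> ring
  calc 2 * ∑ j ∈ Ioo 0 n, c * j / n
      = ∑ j ∈ Ioo 0 n, (c * j / n + c * (n - j) / n) := by
        rw [sum_add_distrib, ← hreflect, two_mul]
    _ = ∑ j ∈ Ioo 0 n, (c - 1 + if n ∣ c * j then 1 else 0) :=
        sum_congr rfl fun j _ => hpair j
    _ = (c - 1) * (n - 1) + gcd c n - 1 := by
        rw [sum_add_distrib, sum_const, sum_boole, card_filter_dvd_mul_Ioo hn, Int.card_Ioo,
          nsmul_eq_mul, Int.toNat_of_nonneg (by omega)]
        ring

-- `-(-b / n)` is `⌈b / n⌉`.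
theorem mem_Ioo_ediv_neg_neg_ediv_iff {n a b x : ℤ} (hn : 0 < n) :
    x ∈ Ioo (a / n) (-(-b / n)) ↔ a < n * x ∧ n * x < b := by
  rw [mem_Ioo, Int.ediv_lt_iff_lt_mul hn, lt_neg, Int.ediv_lt_iff_lt_mul hn, mul_comm x]
  constructor <;> rintro ⟨h1, h2⟩ <;> constructor <;> linarith

theorem card_Ioo_ediv_neg_neg_ediv {n a b : ℤ} (hn : 0 < n) (hab : a < b) :
    (#(Ioo (a / n) (-(-b / n))) : ℤ) = b / n - a / n - if n ∣ b then 1 else 0 := by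
  have hsum := ediv_add_neg_ediv hn b
  have hle := Int.ediv_le_ediv hn hab.le
  rw [Int.card_Ioo]
  split_ifs at hsum ⊢ with hdvd
  · have : a / n < b / n := (Int.ediv_lt_iff_lt_mul hn).2 (by rwa [Int.ediv_mul_cancel hdvd])
    omega
  · omega

end Int

/-- Lattice points strictly inside the triangle with vertices `(0, n)`, `(c, 0)`, `(d, 0)`. -/
def triangleLatticePoints (n c d : ℤ) : Set (ℤ × ℤ) :=
  {p | 0 < p.2 ∧ n * p.1 + d * p.2 < n * d ∧ n * c < n * p.1 + c * p.2}

theorem ncard_triangleLatticePoints_eq_sum {n c d : ℤ} (hn : 0 < n) (hcd : c < d) :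
    ((triangleLatticePoints n c d).ncard : ℤ) =
      ∑ j ∈ Ioo 0 n, (d * j / n - c * j / n - if n ∣ d * j then 1 else 0) := by
  let row (j : ℤ) : Finset (ℤ × ℤ) :=
    (Ioo (c * j / n) (-(-(d * j) / n))).map (.sectL ℤ (n - j))
  have hrows : triangleLatticePoints n c d = ↑((Ioo 0 n).biUnion row) := by
    ext ⟨x, y⟩
    simp only [triangleLatticePoints, Set.mem_ofPred_eq, coe_biUnion, coe_Ioo, Set.mem_iUnion,
      Set.mem_Ioo, mem_coe, row, mem_map, Int.mem_Ioo_ediv_neg_neg_ediv_iff hn,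
      Function.Embedding.sectL_apply, Prod.ext_iff]
    constructor
    · rintro ⟨hy, hd, hc⟩
      have hy' : 0 < n - y := by nlinarith
      exact ⟨n - y, ⟨hy', by linarith⟩, x, ⟨by linarith, by linarith⟩, rfl, by ring⟩
    · rintro ⟨j, ⟨hj0, hjn⟩, x, ⟨hc, hd⟩, rfl, rfl⟩
      exact ⟨by linarith, by linarith, by linarith⟩
  have hdisj : (Ioo 0 n : Set ℤ).PairwiseDisjoint row := by
    intro i _ j _ hij
    simp only [Function.onFun, row, disjoint_left, mem_map, Function.Embedding.sectL_apply]
    rintro _ ⟨x, _, rfl⟩ ⟨x', _, h⟩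
    exact hij (by simpa using (congrArg Prod.snd h).symm)
  rw [hrows, Set.ncard_coe_finset, card_biUnion hdisj, Nat.cast_sum]
  refine sum_congr rfl fun j hj => ?_
  rw [card_map, Int.card_Ioo_ediv_neg_neg_ediv hn (mul_lt_mul_of_pos_right hcd (mem_Ioo.1 hj).1)]

theorem two_mul_ncard_triangleLatticePoints {n c d : ℤ} (hn : 0 < n) (hcd : c < d) :
    2 * ((triangleLatticePoints n c d).ncard : ℤ)
      = (d - c) * (n - 1) - Int.gcd d n - Int.gcd c n + 2 := by
  rw [ncard_triangleLatticePoints_eq_sum hn hcd, sum_sub_distrib, sum_sub_distrib, sum_boole,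
    mul_sub, mul_sub, Int.two_mul_sum_mul_ediv_Ioo hn, Int.two_mul_sum_mul_ediv_Ioo hn,
    Int.card_filter_dvd_mul_Ioo hn]
  ring

theorem affineIndependent_triangle {h a b : ℝ} (hh : h ≠ 0) (hab : a ≠ b) :
    AffineIndependent ℝ ![((0 : ℝ), h), (a, 0), (b, 0)] := by
  refine (affineIndependent_iff_of_fintype (k := ℝ) _).2 fun w hw0 hw i => ?_
  rw [weightedVSub_eq_linear_combination _ hw0, Fin.sum_univ_three] at hw
  rw [Fin.sum_univ_three] at hw0
  simp only [Matrix.cons_val_zero, Matrix.cons_val_one, Matrix.cons_val, Prod.smul_mk,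
    smul_eq_mul, mul_zero, Prod.mk_add_mk, zero_add, add_zero, Prod.ext_iff, Prod.fst_zero,
    Prod.snd_zero, mul_eq_zero] at hw
  have h0 : w 0 = 0 := by simpa [hh] using hw.2
  have h1 : w 1 = 0 := by
    have : w 1 * (a - b) = 0 := by linear_combination hw.1 - b * hw0 + b * h0
    exact (mul_eq_zero.1 this).resolve_right (sub_ne_zero.2 hab)
  fin_cases i <;> simp <;> linarith

theorem mem_interior_convexHull_triangle_iff {h a b : ℝ} (hh : 0 < h) (hab : a < b)
    (q : ℝ × ℝ) :
    q ∈ interior (convexHull ℝ ({(0, h), (a, 0), (b, 0)} : Set (ℝ × ℝ))) ↔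
      0 < q.2 ∧ h * q.1 + b * q.2 < h * b ∧ h * a < h * q.1 + a * q.2 := by
  let pts : Fin 3 → ℝ × ℝ := ![(0, h), (a, 0), (b, 0)]
  have hind : AffineIndependent ℝ pts := affineIndependent_triangle hh.ne' hab.ne
  let basis : AffineBasis (Fin 3) ℝ (ℝ × ℝ) :=
    ⟨pts, hind, hind.affineSpan_eq_top_iff_card_eq_finrank_add_one.2 (by simp)⟩
  have hrange : Set.range basis = {(0, h), (a, 0), (b, 0)} := by
    show Set.range pts = _
    rw [Matrix.range_cons, Matrix.range_cons_cons_empty, Set.singleton_union]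
  have hba : 0 < b - a := sub_pos.2 hab
  set w : Fin 3 → ℝ := ![q.2 / h, (h * b - (h * q.1 + b * q.2)) / (h * (b - a)),
    (h * q.1 + a * q.2 - h * a) / (h * (b - a))]
  have hw1 : ∑ i, w i = 1 := by
    simp only [Fin.sum_univ_three, w, Matrix.cons_val_zero, Matrix.cons_val_one, Matrix.cons_val]
    field_simp
    ring
  have hq : univ.affineCombination ℝ pts w = q := by
    rw [univ.affineCombination_eq_linear_combination _ _ hw1, Fin.sum_univ_three]
    ext
    · simp only [pts, w, Matrix.cons_val_zero, Matrix.cons_val_one, Matrix.cons_val,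
        Prod.smul_mk, smul_eq_mul, mul_zero, Prod.mk_add_mk, zero_add, add_zero]
      field_simp
      ring
    · simp [pts, w, hh.ne']
  have hcoord (i : Fin 3) : basis.coord i q = w i := by
    rw [← hq]
    exact basis.coord_apply_combination_of_mem (mem_univ i) hw1
  rw [← hrange, basis.interior_convexHull, Set.mem_ofPred_eq, Fin.forall_fin_succ]
  simp only [hcoord, w, Fin.forall_fin_two, Matrix.cons_val_zero, Matrix.cons_val_succ,
    Matrix.cons_val_one, Matrix.cons_val_fin_one, div_pos_iff_of_pos_right hh,
    div_pos_iff_of_pos_right (mul_pos hh hba), sub_pos]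

theorem interior_lattice_points_triangle_general (n m k : ℕ) (hn : 2 ≤ n) (hm : 1 ≤ m) :
    2 * (Set.ncard {p : ℤ × ℤ |
        (((p.1 : ℝ), (p.2 : ℝ)) : ℝ × ℝ) ∈ interior (convexHull ℝ
          ({((0 : ℝ), (n : ℝ)), ((k : ℝ), (0 : ℝ)), ((k : ℝ) + (m : ℝ), (0 : ℝ))} :
            Set (ℝ × ℝ)))} : ℤ)
      = ((n : ℤ) - 1) * m - (Nat.gcd n (m + k) : ℤ) - (Nat.gcd n k : ℤ) + 2 := by
  have hgcd (a : ℕ) : Int.gcd (a : ℤ) n = Nat.gcd n a := by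
    rw [Int.gcd_natCast_natCast, Nat.gcd_comm]
  rw [show {p : ℤ × ℤ | _} = triangleLatticePoints n k (k + m) from Set.ext fun p => ?_,
    two_mul_ncard_triangleLatticePoints (by omega) (by omega), ← Nat.cast_add, hgcd, hgcd,
    add_comm k]
  · push_cast
    ring
  · rw [Set.mem_ofPred_eq, triangleLatticePoints, Set.mem_ofPred_eq,
      mem_interior_convexHull_triangle_iff (by exact_mod_cast (by omega : 0 < n))
        (lt_add_of_pos_right _ (Nat.cast_pos.2 hm))]
    dsimp only
    norm_cast

/-- Twice the number of interior lattice points of the triangle with vertices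
`(0,n)`, `(k,0)`, `(k+m,0)` equals `(n-1)m - gcd(n,m+k) - gcd(n,k) + 2`. -/
theorem interior_lattice_points_triangle (n m k : ℕ) (hn : 2 ≤ n) (hm : 1 ≤ m)
    (hk1 : 1 ≤ k) (hk2 : k ≤ n) :
    2 * (Set.ncard {p : ℤ × ℤ |
        (((p.1 : ℝ), (p.2 : ℝ)) : ℝ × ℝ) ∈ interior (convexHull ℝ
          ({((0 : ℝ), (n : ℝ)), ((k : ℝ), (0 : ℝ)), ((k : ℝ) + (m : ℝ), (0 : ℝ))} :
            Set (ℝ × ℝ)))} : ℤ)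
      = ((n : ℤ) - 1) * m - (Nat.gcd n (m + k) : ℤ) - (Nat.gcd n k : ℤ) + 2 :=
  interior_lattice_points_triangle_general n m k hn hm
end

section
/- Let n = beta*gamma, k = beta*delta with gcd(gamma,delta) = 1, 0 <= delta < gamma, and alpha = m. The map from (a,b,c) in [m] x [beta] x [gamma] sending (a,b,c) to the pair (i,j) with i = beta+1-b and j = m*delta^{-1}*c - a + 1 mod m*gamma (where delta^{-1} is the inverse of delta mod gamma, with 0 <= delta^{-1} < gamma) is a bijection onto [beta] x [m*gamma] when the j-coordinate is taken in {1,...,m*gamma} (representing values mod m*gamma). -/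
/-!
The first coordinate `b ↦ β - 1 - b` is a bijection of `Fin β`, so it suffices that
`(a, c) ↦ mδ⁻¹(c + 1) - a` is injective on `Fin m × Fin γ` modulo `mγ`; both sides then have
`mβγ` elements. Reducing a collision mod `m` gives `a ≡ a'`, hence `a = a'`; cancelling `m`
leaves `δ⁻¹c ≡ δ⁻¹c' (mod γ)`, and multiplying by `δ` gives `c = c'`.
-/

theorem Fin.eq_of_intCast_modEq {n : ℕ} {a b : Fin n} (h : (a : ℤ) ≡ b [ZMOD n]) : a = b :=
  Fin.ext <| (Int.natCast_modEq_iff.mp h).eq_of_lt_of_lt a.isLt b.isLt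

theorem Int.ModEq.cancel_left_of_mul_modEq_one {n u v a b : ℤ} (hvu : v * u ≡ 1 [ZMOD n])
    (h : u * a ≡ u * b [ZMOD n]) : a ≡ b [ZMOD n] := by
  have hv : v * u * a ≡ v * u * b [ZMOD n] := by
    simpa only [mul_assoc] using h.mul_left v
  simpa only [one_mul] using ((hvu.mul_right a).symm.trans hv).trans (hvu.mul_right b)

theorem Int.ModEq.of_mul_sub_modEq_mul_sub {n a b x y : ℤ}
    (h : n * x - a ≡ n * y - b [ZMOD n]) : a ≡ b [ZMOD n] := by
  have hxy : n * x ≡ n * y [ZMOD n] :=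
    (Int.modEq_zero_iff_dvd.2 (dvd_mul_right n x)).trans
      (Int.modEq_zero_iff_dvd.2 (dvd_mul_right n y)).symm
  simpa using (h.sub hxy).neg

theorem eq_and_eq_of_mul_mul_sub_modEq {m γ : ℕ} {u v : ℤ} (hvu : v * u ≡ 1 [ZMOD γ])
    {a a' : Fin m} {c c' : Fin γ}
    (h : m * u * c - a ≡ m * u * c' - a' [ZMOD m * γ]) : a = a' ∧ c = c' := by
  have hm : (m : ℤ) ≠ 0 := by exact_mod_cast a.pos.ne'
  obtain rfl : a = a' :=
    Fin.eq_of_intCast_modEq (Int.ModEq.of_mul_sub_modEq_mul_sub (x := u * c) (y := u * c')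
      (by simpa only [mul_assoc] using h.of_mul_right γ))
  refine ⟨rfl, Fin.eq_of_intCast_modEq (hvu.cancel_left_of_mul_modEq_one ?_)⟩
  refine Int.ModEq.mul_left_cancel' hm ?_
  simpa only [mul_assoc] using h.add_right_cancel' (-a)

theorem reindexing_bijective_general (m β γ δ δinv : ℕ) (hm : 1 ≤ m) (hγ : 1 ≤ γ)
    (hinv : (δ * δinv) % γ = 1 % γ) :
    Function.Bijective (fun p : Fin m × Fin β × Fin γ =>
      ((p.2.1.rev,
        (((m : ℤ) * (δinv : ℤ) * ((p.2.2 : ℕ) + 1) - ((p.1 : ℕ) + 1) + 1 : ℤ) :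
          ZMod (m * γ))) : Fin β × ZMod (m * γ))) := by
  have : NeZero (m * γ) := ⟨by positivity⟩
  have hδ : (δ : ℤ) * δinv ≡ 1 [ZMOD γ] := by exact_mod_cast Int.natCast_modEq_iff.mpr hinv
  refine (Fintype.bijective_iff_injective_and_card _).mpr ⟨?_, by simp [ZMod.card]; ring⟩
  rintro ⟨a, b, c⟩ ⟨a', b', c'⟩ h
  obtain ⟨hb, hj⟩ := Prod.mk.inj h
  have hmod : m * δinv * c - a + m * δinv ≡ m * δinv * c' - a' + m * δinv [ZMOD m * γ] := by
    have := (ZMod.intCast_eq_intCast_iff _ _ _).mp hj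
    push_cast at this
    convert this using 1 <;> ring
  obtain ⟨rfl, rfl⟩ := eq_and_eq_of_mul_mul_sub_modEq hδ (hmod.add_right_cancel' _)
  rw [show b = b' from Fin.rev_injective hb]

/-- The re-indexing map `(a,b,c) ↦ (β+1-b, mδ⁻¹c - a + 1 mod mγ)` from
`[m] × [β] × [γ]` to `[β] × (ℤ/mγℤ)` is a bijection. -/
theorem reindexing_bijective (m β γ δ δinv : ℕ) (hm : 1 ≤ m) (hβ : 1 ≤ β)
    (hγ : 1 ≤ γ) (hδ : δ < γ) (hgcd : Nat.gcd γ δ = 1) (hδinv : δinv < γ)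
    (hinv : (δ * δinv) % γ = 1 % γ) :
    Function.Bijective (fun p : Fin m × Fin β × Fin γ =>
      ((p.2.1.rev,
        (((m : ℤ) * (δinv : ℤ) * ((p.2.2 : ℕ) + 1) - ((p.1 : ℕ) + 1) + 1 : ℤ) :
          ZMod (m * γ))) : Fin β × ZMod (m * γ))) :=
  reindexing_bijective_general m β γ δ δinv hm hγ hinv
end

section
/- Suppose theta_i^t (indexed by i in Z and t in Z^2) are nonzero complex numbers satisfying the octahedron recurrence a_2 * theta_{i+1}^{t+e2} * theta_i^{t+2e1} - a_1 * theta_{i+1}^{t+2e1} * theta_i^{t+e2} = c * theta_i^{t+e1+e2} * theta_{i+1}^{t+e1} for fixed nonzero constants a_1, a_2, c (where e1 = (1,0), e2 = (1,1)). Define q_{j,i}^t = K * a_j * c_{i+j-1}^t * (theta_i^{t+e_j} theta_{i-1}^{t+e_{j-1}}) / (theta_i^{t+e_{j-1}} theta_{i-1}^{t+e_j}) for j = 1,2 with e_0 = (0,0), where K is a nonzero constant and c_i^t satisfies c_i^{t+e_u} = c_{i+u}^t. Then the ratio f_i^t := (q_{2,i+1}^t - q_{1,i+1}^{t+e1}) /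 (q_{2,i}^{t+e1} - q_{1,i}^{t+e2}) equals 1, i.e., q_{2,i+1}^t + q_{1,i}^{t+e2} = q_{1,i+1}^{t+e1} + q_{2,i}^{t+e1}, whenever the denominator is nonzero. -/
/-!
Both sides of the Toda equation are differences `q₂ - q₁` at neighbouring sites, and each such
difference collapses, after clearing denominators, to one instance of the octahedron recurrence:
`q_{2,i+1}^t - q_{1,i+1}^{t+e₁}` uses the recurrence at `(i, t)`, while
`q_{2,i}^{t+e₁} - q_{1,i}^{t+e₂}` uses it at `(i - 1, t)` together with the shift property of `c`.
Both reduce to the same monomial `K c_{i+2}^t c₀ θ_i^{t+e₁+e₂} θ_i^{t+e₁} / (θ_i^{t+e₂} θ_i^{t+2e₁})`.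
-/

section Toda

variable {F : Type*} [Field F]

def OctahedronAt (a1 a2 c0 : F) (θ : ℤ → ℤ × ℤ → F) (i : ℤ) (t : ℤ × ℤ) : Prop :=
  a2 * θ (i + 1) (t + (1, 1)) * θ i (t + (2, 0))
      - a1 * θ (i + 1) (t + (2, 0)) * θ i (t + (1, 1))
    = c0 * θ i (t + (1, 0) + (1, 1)) * θ (i + 1) (t + (1, 0))

def todaQ1 (K a1 : F) (c θ : ℤ → ℤ × ℤ → F) (i : ℤ) (t : ℤ × ℤ) : F :=
  K * a1 * c i t * (θ i (t + (1, 0)) * θ (i - 1) t) / (θ i t * θ (i - 1) (t + (1, 0)))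

def todaQ2 (K a2 : F) (c θ : ℤ → ℤ × ℤ → F) (i : ℤ) (t : ℤ × ℤ) : F :=
  K * a2 * c (i + 1) t * (θ i (t + (1, 1)) * θ (i - 1) (t + (1, 0))) /
    (θ i (t + (1, 0)) * θ (i - 1) (t + (1, 1)))

def todaDifference (K c0 : F) (c θ : ℤ → ℤ × ℤ → F) (i : ℤ) (t : ℤ × ℤ) : F :=
  K * c (i + 2) t * c0 * θ i (t + (1, 0) + (1, 1)) * θ i (t + (1, 0)) /
    (θ i (t + (1, 1)) * θ i (t + (2, 0)))

variable (K a1 a2 c0 : F) (c θ : ℤ → ℤ × ℤ → F) (i : ℤ) (t : ℤ × ℤ)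

theorem todaQ2_succ_sub_todaQ1_succ (hθ : ∀ i t, θ i t ≠ 0)
    (hc₁ : c (i + 1) (t + (1, 0)) = c (i + 2) t) (hoct : OctahedronAt a1 a2 c0 θ i t) :
    todaQ2 K a2 c θ (i + 1) t - todaQ1 K a1 c θ (i + 1) (t + (1, 0)) =
      todaDifference K c0 c θ i t := by
  have hsucc : t + (1, 0) + (1, 0) = t + (2, 0) := by rw [add_assoc]; rfl
  unfold todaQ1 todaQ2 todaDifference OctahedronAt at *
  rw [hc₁, show i + 1 + 1 = i + 2 by ring, show i + 1 - 1 = i by ring, hsucc]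
  have := hθ (i + 1) (t + (1, 0))
  have := hθ i (t + (1, 1))
  have := hθ i (t + (2, 0))
  field_simp
  linear_combination K * c (i + 2) t * θ i (t + (1, 0)) * hoct

theorem todaQ2_sub_todaQ1 (hθ : ∀ i t, θ i t ≠ 0)
    (hc₁ : c (i + 1) (t + (1, 0)) = c (i + 2) t)
    (hc₂ : c i (t + (1, 1)) = c (i + 2) t)
    (hoct : OctahedronAt a1 a2 c0 θ (i - 1) t) :
    todaQ2 K a2 c θ i (t + (1, 0)) - todaQ1 K a1 c θ i (t + (1, 1)) =
      todaDifference K c0 c θ i t := by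
  have hsucc : t + (1, 0) + (1, 0) = t + (2, 0) := by rw [add_assoc]; rfl
  have hcomm : t + (1, 1) + (1, 0) = t + (1, 0) + (1, 1) := add_right_comm _ _ _
  unfold todaQ1 todaQ2 todaDifference OctahedronAt at *
  rw [hc₁, hc₂, hsucc, hcomm]
  rw [show i - 1 + 1 = i by ring] at hoct
  have := hθ i (t + (1, 1))
  have := hθ i (t + (2, 0))
  have := hθ (i - 1) (t + (1, 0) + (1, 1))
  field_simp
  linear_combination K * c (i + 2) t * θ i (t + (1, 0) + (1, 1)) * hoct

end Toda

theorem octahedron_implies_toda_general (θ : ℤ → ℤ × ℤ → ℂ) (c : ℤ → ℤ × ℤ → ℂ)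
    (a1 a2 c0 K : ℂ)
    (hθ : ∀ i t, θ i t ≠ 0)
    (hshift1 : ∀ (i : ℤ) (t : ℤ × ℤ), c i (t + (1, 0)) = c (i + 1) t)
    (hshift2 : ∀ (i : ℤ) (t : ℤ × ℤ), c i (t + (1, 1)) = c (i + 2) t)
    (hoct : ∀ (i : ℤ) (t : ℤ × ℤ),
      a2 * θ (i + 1) (t + (1, 1)) * θ i (t + (2, 0))
        - a1 * θ (i + 1) (t + (2, 0)) * θ i (t + (1, 1))
      = c0 * θ i (t + (1, 0) + (1, 1)) * θ (i + 1) (t + (1, 0)))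
    (q1 q2 : ℤ → ℤ × ℤ → ℂ)
    (hq1 : ∀ (i : ℤ) (t : ℤ × ℤ), q1 i t = K * a1 * c i t *
      (θ i (t + (1, 0)) * θ (i - 1) t) / (θ i t * θ (i - 1) (t + (1, 0))))
    (hq2 : ∀ (i : ℤ) (t : ℤ × ℤ), q2 i t = K * a2 * c (i + 1) t *
      (θ i (t + (1, 1)) * θ (i - 1) (t + (1, 0))) /
        (θ i (t + (1, 0)) * θ (i - 1) (t + (1, 1)))) :
    ∀ (i : ℤ) (t : ℤ × ℤ),
      q2 i (t + (1, 0)) - q1 i (t + (1, 1)) ≠ 0 →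
      q2 (i + 1) t + q1 i (t + (1, 1)) = q1 (i + 1) (t + (1, 0)) + q2 i (t + (1, 0)) := by
  intro i t _
  obtain rfl : q1 = todaQ1 K a1 c θ := funext₂ hq1
  obtain rfl : q2 = todaQ2 K a2 c θ := funext₂ hq2
  have hc : c (i + 1) (t + (1, 0)) = c (i + 2) t := by rw [hshift1, add_assoc]; rfl
  have hA := todaQ2_succ_sub_todaQ1_succ K a1 a2 c0 c θ i t hθ hc (hoct i t)
  have hB := todaQ2_sub_todaQ1 K a1 a2 c0 c θ i t hθ hc (hshift2 i t) (hoct (i - 1) t)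
  linear_combination hA - hB

/-- If the theta values satisfy the octahedron recurrence, then the quantities
`q_{j,i}^t` built from them satisfy the discrete Toda-type equation
`q_{2,i+1}^t + q_{1,i}^{t+e₂} = q_{1,i+1}^{t+e₁} + q_{2,i}^{t+e₁}`. -/
theorem octahedron_implies_toda (θ : ℤ → ℤ × ℤ → ℂ) (c : ℤ → ℤ × ℤ → ℂ)
    (a1 a2 c0 K : ℂ) (ha1 : a1 ≠ 0) (ha2 : a2 ≠ 0) (hc0 : c0 ≠ 0) (hK : K ≠ 0)
    (hθ : ∀ i t, θ i t ≠ 0)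
    (hshift1 : ∀ (i : ℤ) (t : ℤ × ℤ), c i (t + (1, 0)) = c (i + 1) t)
    (hshift2 : ∀ (i : ℤ) (t : ℤ × ℤ), c i (t + (1, 1)) = c (i + 2) t)
    (hoct : ∀ (i : ℤ) (t : ℤ × ℤ),
      a2 * θ (i + 1) (t + (1, 1)) * θ i (t + (2, 0))
        - a1 * θ (i + 1) (t + (2, 0)) * θ i (t + (1, 1))
      = c0 * θ i (t + (1, 0) + (1, 1)) * θ (i + 1) (t + (1, 0)))
    (q1 q2 : ℤ → ℤ × ℤ → ℂ)
    (hq1 : ∀ (i : ℤ) (t : ℤ × ℤ), q1 i t = K * a1 * c i t *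
      (θ i (t + (1, 0)) * θ (i - 1) t) / (θ i t * θ (i - 1) (t + (1, 0))))
    (hq2 : ∀ (i : ℤ) (t : ℤ × ℤ), q2 i t = K * a2 * c (i + 1) t *
      (θ i (t + (1, 1)) * θ (i - 1) (t + (1, 0))) /
        (θ i (t + (1, 0)) * θ (i - 1) (t + (1, 1)))) :
    ∀ (i : ℤ) (t : ℤ × ℤ),
      q2 i (t + (1, 0)) - q1 i (t + (1, 1)) ≠ 0 →
      q2 (i + 1) t + q1 i (t + (1, 1)) = q1 (i + 1) (t + (1, 0)) + q2 i (t + (1, 0)) :=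
  octahedron_implies_toda_general θ c a1 a2 c0 K hθ hshift1 hshift2 hoct q1 q2 hq1 hq2
end
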